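/- Let π = (n_1,…,n_m) (m ≥ 2) be a partition of n and let 0 < ρ ≤ 1. Then there exist constants η_{π,ρ} and η̃_{n,ρ}, depending only on (π,ρ) and on (n,ρ) respectively, with 0 ≤ η_{π,ρ} < η̃_{n,ρ} < 1, such that for every quasi-cyclic pivot sequence O ∈ B̄_c^(m), every real symmetric n×n matrix A, and every matrix A' obtained from A by one sweep (of length T = |O|) of the quasi-cyclic block Jacobi method defined by the pivot strategy I_O in which all transformation matrices belong to the class UBC_π(ρ), one has S(A')² ≤ η_{π,ρ}·S(A)². -/

import Mathlib

namespace BlockJacobi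

open scoped BigOperators

attribute [local instance] Classical.propDecidable

noncomputable section

/-- Offset (starting index) of block `r` for the partition `c`. -/
def off (c : ℕ → ℕ) (r : ℕ) : ℕ := ∑ k ∈ Finset.range r, c k

/-- `t` belongs to block `r`. -/
def inBlk (c : ℕ → ℕ) (r t : ℕ) : Prop := off c r ≤ t ∧ t < off c r + c r

/-- `s` and `t` belong to the same block (among the first `m` blocks). -/
def sameBlk (c : ℕ → ℕ) (m s t : ℕ) : Prop := ∃ r, r < m ∧ inBlk c r s ∧ inBlk c r t

/-- `t` belongs to the pivot zone: block `i` or block `j`. -/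
def inPiv (c : ℕ → ℕ) (i j t : ℕ) : Prop := inBlk c i t ∨ inBlk c j t

/-- `(c, m)` is a partition of `n` into `m` blocks (0-based blocks `0,…,m-1`). -/
def IsPartition (n m : ℕ) (c : ℕ → ℕ) : Prop :=
  2 ≤ m ∧ (∀ i < m, 1 ≤ c i) ∧ ∑ i ∈ Finset.range m, c i = n

/-- elementary block matrix with (0-based) pivot pair `(i,j)`. -/
def IsElem {n : ℕ} (c : ℕ → ℕ) (i j : ℕ) (U : Matrix (Fin n) (Fin n) ℝ) : Prop :=
  ∀ s t : Fin n, ¬(inPiv c i j (s : ℕ) ∧ inPiv c i j (t : ℕ)) →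
    U s t = if s = t then 1 else 0

/-- orthogonality. -/
def Orth {n : ℕ} (U : Matrix (Fin n) (Fin n) ℝ) : Prop := U.transpose * U = 1

/-- Euclidean norm of a vector. -/
def enorm {ι : Type*} [Fintype ι] (x : ι → ℝ) : ℝ := Real.sqrt (∑ i, x i ^ 2)

/-- smallest singular value of the `(r,r)` diagonal block of `U`. -/
def sigmaMinBlk {n : ℕ} (c : ℕ → ℕ) (r : ℕ) (U : Matrix (Fin n) (Fin n) ℝ) : ℝ :=
  sInf { v : ℝ | ∃ x : Fin n → ℝ,
    (∀ t : Fin n, ¬ inBlk c r (t : ℕ) → x t = 0) ∧ enorm x = 1 ∧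
    enorm (fun t : Fin n => if inBlk c r (t : ℕ) then U.mulVec x t else 0) = v }

/-- the constant `γ_{ij}` of the UBC class. -/
def gammaUBC (c : ℕ → ℕ) (i j : ℕ) : ℝ :=
  3 / Real.sqrt (((4 : ℝ) ^ c i + 6 * (c j : ℝ) - 1) * ((c j : ℝ) + 1))

/-- `U` is in the UBC class with pivot pair `(i,j)`: block structure given by `cs`,
`γ`-bound computed from the partition `cg`. -/
def IsUBC2 {n : ℕ} (cs cg : ℕ → ℕ) (ρ : ℝ) (i j : ℕ) (U : Matrix (Fin n) (Fin n) ℝ) : Prop :=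
  IsElem cs i j U ∧ Orth U ∧ sigmaMinBlk cs i U = sigmaMinBlk cs j U ∧
    ρ * gammaUBC cg i j ≤ sigmaMinBlk cs i U

/-- `U ∈ UBC_π(ρ)` with pivot pair `(i,j)`. -/
def IsUBC {n : ℕ} (c : ℕ → ℕ) (ρ : ℝ) (i j : ℕ) (U : Matrix (Fin n) (Fin n) ℝ) : Prop :=
  IsUBC2 c c ρ i j U

/-- the `(i,j)` pivot submatrix of `A` is diagonal. -/
def PivDiag {n : ℕ} (c : ℕ → ℕ) (i j : ℕ) (A : Matrix (Fin n) (Fin n) ℝ) : Prop :=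
  ∀ s t : Fin n, s ≠ t → inPiv c i j (s : ℕ) → inPiv c i j (t : ℕ) → A s t = 0

/-- square of the off-norm `S(A)`. -/
def offSq {n : ℕ} (A : Matrix (Fin n) (Fin n) ℝ) : ℝ :=
  ∑ s : Fin n, ∑ t : Fin n, if (s : ℕ) < (t : ℕ) then A s t ^ 2 else 0

/-- square of the off-norm of the `(i,j)` pivot submatrix of `A`. -/
def offSqPiv {n : ℕ} (c : ℕ → ℕ) (i j : ℕ) (A : Matrix (Fin n) (Fin n) ℝ) : ℝ :=
  ∑ s : Fin n, ∑ t : Fin n,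
    if (s : ℕ) < (t : ℕ) ∧ inPiv c i j (s : ℕ) ∧ inPiv c i j (t : ℕ) then A s t ^ 2 else 0

/-- Frobenius norm. -/
def frob {n : ℕ} (A : Matrix (Fin n) (Fin n) ℝ) : ℝ :=
  Real.sqrt (∑ s : Fin n, ∑ t : Fin n, A s t ^ 2)

/-- One sweep of the block Jacobi method along the pivot list `L`; block structure from
`cs`, UBC bound computed from the partition `cg`. -/
def Sweep2 {n : ℕ} (cs cg : ℕ → ℕ) (ρ : ℝ) (L : List (ℕ × ℕ))
    (A A' : Matrix (Fin n) (Fin n) ℝ) : Prop :=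
  ∃ B : ℕ → Matrix (Fin n) (Fin n) ℝ,
    B 0 = A ∧ B L.length = A' ∧
    ∀ (k : ℕ) (hk : k < L.length),
      ∃ U : Matrix (Fin n) (Fin n) ℝ,
        IsUBC2 cs cg ρ (L.get ⟨k, hk⟩).1 (L.get ⟨k, hk⟩).2 U ∧
        B (k + 1) = U.transpose * B k * U ∧
        PivDiag cs (L.get ⟨k, hk⟩).1 (L.get ⟨k, hk⟩).2 (B (k + 1))

/-- One sweep of the block Jacobi method with `UBC_π(ρ)` transformations. -/
def Sweep {n : ℕ} (c : ℕ → ℕ) (ρ : ℝ) (L : List (ℕ × ℕ))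
    (A A' : Matrix (Fin n) (Fin n) ℝ) : Prop :=
  Sweep2 c c ρ L A A'

/-- `L ∈ O(P_m)` (0-based pairs). -/
def SeqOn (m : ℕ) (L : List (ℕ × ℕ)) : Prop :=
  (∀ p ∈ L, p.1 < p.2 ∧ p.2 < m) ∧ ∀ i j : ℕ, i < j → j < m → (i, j) ∈ L

/-- `L ∈ O(S)` for `S ⊆ P_m`. -/
def SeqOnSet (S : Set (ℕ × ℕ)) (L : List (ℕ × ℕ)) : Prop :=
  (∀ p ∈ L, p ∈ S) ∧ ∀ p ∈ S, p ∈ L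

/-- the class `B_c^(m)` of column-wise orderings (0-based). -/
def memBc (m : ℕ) (L : List (ℕ × ℕ)) : Prop :=
  ∃ τ : ℕ → ℕ → ℕ,
    (∀ j, Set.BijOn (τ j) (Set.Iio j) (Set.Iio j)) ∧
    L = (List.range' 1 (m - 1)).flatMap fun j => (List.range j).map fun a => (τ j a, j)

/-- the class `B_r^(m)` of row-wise orderings (0-based). -/
def memBr (m : ℕ) (L : List (ℕ × ℕ)) : Prop :=
  ∃ σ : ℕ → ℕ → ℕ,
    (∀ i, Set.BijOn (σ i) (Set.Ico (i + 1) m) (Set.Ico (i + 1) m)) ∧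
    L = ((List.range (m - 1)).reverse).flatMap fun i =>
      (List.range' (i + 1) (m - 1 - i)).map fun b => (i, σ i b)

/-- the class `B_sp^(m)` of serial orderings with permutations. -/
def memBsp (m : ℕ) (L : List (ℕ × ℕ)) : Prop :=
  memBc m L ∨ memBc m L.reverse ∨ memBr m L ∨ memBr m L.reverse

/-- the quasi-cyclic class `B̄_c^(m)`. -/
def memBcQ (m : ℕ) (L : List (ℕ × ℕ)) : Prop :=
  ∃ (τ : ℕ → ℕ → ℕ) (E : ℕ → List (ℕ × ℕ)),
    (∀ j, Set.BijOn (τ j) (Set.Iio j) (Set.Iio j)) ∧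
    (∀ j, ∀ p ∈ E j, p.1 < p.2 ∧ p.2 ≤ j) ∧
    L = (List.range' 1 (m - 1)).flatMap fun j =>
      ((List.range j).map fun a => (τ j a, j)) ++ (if j = 1 then [] else E j)

/-- one admissible transposition (on lists of `α`'s carrying pairs via `pr`). -/
def AdjSwapG {α : Type*} (pr : α → ℕ × ℕ) (L L' : List α) : Prop :=
  ∃ (l₁ l₂ : List α) (a b : α),
    ({(pr a).1, (pr a).2} ∩ {(pr b).1, (pr b).2} : Set ℕ) = ∅ ∧
    L = l₁ ++ a :: b :: l₂ ∧ L' = l₁ ++ b :: a :: l₂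

/-- equivalence (finitely many admissible transpositions). -/
def EquivG {α : Type*} (pr : α → ℕ × ℕ) : List α → List α → Prop :=
  Relation.ReflTransGen (AdjSwapG pr)

/-- shift-equivalence. -/
def ShiftG {α : Type*} (L L' : List α) : Prop :=
  ∃ l₁ l₂ : List α, L = l₁ ++ l₂ ∧ L' = l₂ ++ l₁

/-- weak equivalence. -/
def WeakG {α : Type*} (pr : α → ℕ × ℕ) : List α → List α → Prop :=
  Relation.ReflTransGen fun X Y => EquivG pr X Y ∨ ShiftG X Y

/-- equivalence of pivot sequences. -/
def PEquivL : List (ℕ × ℕ) → List (ℕ × ℕ) → Prop := EquivG id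

/-- shift-equivalence of pivot sequences. -/
def ShiftEq : List (ℕ × ℕ) → List (ℕ × ℕ) → Prop := ShiftG

/-- weak equivalence of pivot sequences. -/
def WeakEq : List (ℕ × ℕ) → List (ℕ × ℕ) → Prop := WeakG id

/-- weak equivalence realized by a chain containing exactly `d` shift-equivalent
adjacent pairs (all other adjacent pairs being equivalent). -/
def WeakChainD (d : ℕ) (L L' : List (ℕ × ℕ)) : Prop :=
  ∃ (r : ℕ) (cs : ℕ → List (ℕ × ℕ)) (s : Finset ℕ),
    cs 0 = L ∧ cs r = L' ∧ s.card = d ∧ (∀ k ∈ s, k < r) ∧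
    ∀ k < r, if k ∈ s then ShiftEq (cs k) (cs (k + 1)) else PEquivL (cs k) (cs (k + 1))

/-- `q` is a permutation of `{0,…,m-1}`. -/
def IsPermOn (m : ℕ) (q : ℕ → ℕ) : Prop := Set.BijOn q (Set.Iio m) (Set.Iio m)

/-- `O(q)`: apply a permutation to all pairs of the sequence. -/
def pApply (q : ℕ → ℕ) (L : List (ℕ × ℕ)) : List (ℕ × ℕ) :=
  L.map fun p => if q p.1 < q p.2 then (q p.1, q p.2) else (q p.2, q p.1)

/-- `compSeq q t = q_t ∘ q_{t-1} ∘ ⋯ ∘ q_1`. -/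
def compSeq (q : ℕ → ℕ → ℕ) : ℕ → ℕ → ℕ
  | 0 => id
  | t + 1 => q (t + 1) ∘ compSeq q t

/-- the class `B_spg^(m)`. -/
def memBspg (m : ℕ) (L : List (ℕ × ℕ)) : Prop :=
  ∃ L' L'' : List (ℕ × ℕ), memBsp m L'' ∧
    ((∃ q, IsPermOn m q ∧ L' = pApply q L) ∧ PEquivL L' L'' ∨
      PEquivL L L' ∧ ∃ q, IsPermOn m q ∧ L'' = pApply q L')

/-- the class `B_sg^(m)` of generalized serial orderings. -/
def memBsg (m : ℕ) (L : List (ℕ × ℕ)) : Prop :=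
  ∃ L' L'' : List (ℕ × ℕ), memBsp m L'' ∧
    ((∃ q, IsPermOn m q ∧ L' = pApply q L) ∧ WeakEq L' L'' ∨
      WeakEq L L' ∧ ∃ q, IsPermOn m q ∧ L'' = pApply q L')

/-- index set of the entries of the off-diagonal blocks in the upper triangle;
it has cardinality `K`. -/
def OffI (n m : ℕ) (c : ℕ → ℕ) : Type :=
  { p : Fin n × Fin n // (p.1 : ℕ) < (p.2 : ℕ) ∧ ¬ sameBlk c m (p.1 : ℕ) (p.2 : ℕ) }

instance (n m : ℕ) (c : ℕ → ℕ) : Fintype (OffI n m c) := by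
  unfold OffI; exact Subtype.fintype _

instance (n m : ℕ) (c : ℕ → ℕ) : DecidableEq (OffI n m c) := Classical.decEq _

/-- `vec_{π,0}⁻¹` : the symmetric matrix with zero diagonal blocks built from a vector. -/
def symOf {n m : ℕ} {c : ℕ → ℕ} (a : OffI n m c → ℝ) : Matrix (Fin n) (Fin n) ℝ :=
  fun s t =>
    if h : (s : ℕ) < (t : ℕ) ∧ ¬ sameBlk c m (s : ℕ) (t : ℕ) then a ⟨(s, t), h⟩
    else if h' : (t : ℕ) < (s : ℕ) ∧ ¬ sameBlk c m (t : ℕ) (s : ℕ) then a ⟨(t, s), h'⟩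
    else 0

/-- `N_{ij}` : set the pivot submatrix to zero. -/
def nij {n : ℕ} (c : ℕ → ℕ) (i j : ℕ) (M : Matrix (Fin n) (Fin n) ℝ) :
    Matrix (Fin n) (Fin n) ℝ :=
  fun s t => if inPiv c i j (s : ℕ) ∧ inPiv c i j (t : ℕ) then 0 else M s t

/-- the block Jacobi annihilator `R_{ij}(Û)` (as a `K×K` matrix), parametrized by the
full elementary block matrix `U` with pivot pair `(i,j)` and pivot submatrix `Û`. -/
def annih (n m : ℕ) (c : ℕ → ℕ) (i j : ℕ) (U : Matrix (Fin n) (Fin n) ℝ) :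
    Matrix (OffI n m c) (OffI n m c) ℝ :=
  fun p q => nij c i j (U.transpose * symOf (Pi.single q (1 : ℝ)) * U) p.1.1 p.1.2

/-- the class `I_{ij}` of block Jacobi annihilators. -/
def Iij (n m : ℕ) (c : ℕ → ℕ) (i j : ℕ) : Set (Matrix (OffI n m c) (OffI n m c) ℝ) :=
  { R | ∃ U : Matrix (Fin n) (Fin n) ℝ, IsElem c i j U ∧ Orth U ∧ R = annih n m c i j U }

/-- the class `I_{ij}^{UBC(ρ)}`. -/
def IijUBC (n m : ℕ) (c : ℕ → ℕ) (ρ : ℝ) (i j : ℕ) :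
    Set (Matrix (OffI n m c) (OffI n m c) ℝ) :=
  { R | ∃ U : Matrix (Fin n) (Fin n) ℝ, IsUBC c ρ i j U ∧ R = annih n m c i j U }

/-- the class `J_O^{UBC_π(ρ)}` of block Jacobi operators. -/
def JopUBC (n m : ℕ) (c : ℕ → ℕ) (ρ : ℝ) (L : List (ℕ × ℕ)) :
    Set (Matrix (OffI n m c) (OffI n m c) ℝ) :=
  { J | ∃ R : ℕ → Matrix (OffI n m c) (OffI n m c) ℝ,
      (∀ (k : ℕ) (hk : k < L.length),
        R k ∈ IijUBC n m c ρ (L.get ⟨k, hk⟩).1 (L.get ⟨k, hk⟩).2) ∧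
      J = (((List.range L.length).reverse).map R).prod }

/-- spectral norm (operator 2-norm). -/
def specNorm {ι : Type*} [Fintype ι] (M : Matrix ι ι ℝ) : ℝ :=
  sSup { v : ℝ | ∃ x : ι → ℝ, enorm x = 1 ∧ enorm (M.mulVec x) = v }

/-- spectral radius. -/
def specRad {ι : Type*} [Fintype ι] (M : Matrix ι ι ℝ) : ℝ :=
  sSup { v : ℝ | ∃ (μ : ℂ) (x : ι → ℂ), x ≠ 0 ∧
    (M.map (fun r : ℝ => (r : ℂ))).mulVec x = μ • x ∧ v = ‖μ‖ }

/-- product `R_{T-1} ⋯ R_1 R_0` of a decorated pivot list. -/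
def prodD {n m : ℕ} {c : ℕ → ℕ}
    (L : List ((ℕ × ℕ) × Matrix (OffI n m c) (OffI n m c) ℝ)) :
    Matrix (OffI n m c) (OffI n m c) ℝ :=
  ((L.map Prod.snd).reverse).prod

/-- plane (Givens) rotation in the `(i,j)` coordinate plane. -/
def rotM (n : ℕ) (i j : ℕ) (φ : ℝ) : Matrix (Fin n) (Fin n) ℝ :=
  fun s t =>
    if (s : ℕ) = i ∧ (t : ℕ) = i then Real.cos φ
    else if (s : ℕ) = j ∧ (t : ℕ) = j then Real.cos φ
    else if (s : ℕ) = i ∧ (t : ℕ) = j then - Real.sin φ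
    else if (s : ℕ) = j ∧ (t : ℕ) = i then Real.sin φ
    else if s = t then 1 else 0

/-- One sweep of the scalar (element-wise) cyclic Jacobi method with rotation
angles in `[-π/4, π/4]`. -/
def ScalarSweep {n : ℕ} (L : List (ℕ × ℕ)) (A A' : Matrix (Fin n) (Fin n) ℝ) : Prop :=
  ∃ (B : ℕ → Matrix (Fin n) (Fin n) ℝ) (φ : ℕ → ℝ),
    B 0 = A ∧ B L.length = A' ∧
    ∀ (k : ℕ) (hk : k < L.length),
      |φ k| ≤ Real.pi / 4 ∧
      B (k + 1) =
        (rotM n (L.get ⟨k, hk⟩).1 (L.get ⟨k, hk⟩).2 (φ k)).transpose * B k *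
          rotM n (L.get ⟨k, hk⟩).1 (L.get ⟨k, hk⟩).2 (φ k) ∧
      ∀ s t : Fin n, (s : ℕ) = (L.get ⟨k, hk⟩).1 → (t : ℕ) = (L.get ⟨k, hk⟩).2 →
        B (k + 1) s t = 0

/-- `k` concatenated copies of a list. -/
def iterList {α : Type*} : ℕ → List α → List α
  | 0, _ => []
  | k + 1, L => L ++ iterList k L


/-!
Write `off_J(B)` for the squared Frobenius norm of the off-diagonal blocks of `B` among the block
indices in `J`. A step with pivot pair `(i, j)`, `i, j ∈ J`, lowers `off_J` by exactly the energy
of the pivot blocks `(i, j)` and `(j, i)`, because conjugation by an orthogonal elementary block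
matrix preserves the Frobenius norms of principal submatrices containing the pivot submatrix.

In column `j` of a quasi-cyclic sweep the block `(r, j)`, `r < j`, is annihilated at its turn.
Before that, each step `(e, j)` of the column shrinks it at most by the factor
`μ = ρ γ_min ≤ σ_min(U_ee)`, up to the norm of the still untouched block `(r, e)`. Squaring and
summing over `r`, the energy among the blocks `0, …, j` after column `j` is at most
`K = (4n + 2) / μ^(2n)` times the energy among the blocks `0, …, j - 1` before it plus the energy
annihilated by the column. An induction over the columns gives
`off(A') ≤ (1 - (K + 1)^(-n)) off(A)`; as every diagonal block of `A'` is diagonal,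
`2 S(A')² = off(A')`, while `off(A) ≤ 2 S(A)²`.
-/

open Finset
open scoped Matrix

section SumsOfSquares

variable {ι : Type*}

theorem sum_sq_vecMul_eq_of_orthonormal_rows [DecidableEq ι] (A Y : Finset ι) (V : ι → ι → ℝ)
    (hV : ∀ k ∈ A, ∀ l ∈ A, ∑ q ∈ Y, V k q * V l q = if k = l then 1 else 0) (w : ι → ℝ) :
    ∑ q ∈ Y, (∑ k ∈ A, w k * V k q) ^ 2 = ∑ k ∈ A, w k ^ 2 := by
  calc ∑ q ∈ Y, (∑ k ∈ A, w k * V k q) ^ 2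
      = ∑ k ∈ A, ∑ l ∈ A, w k * w l * ∑ q ∈ Y, V k q * V l q := by
        simp_rw [sq, sum_mul_sum, mul_sum]
        rw [sum_comm]
        refine sum_congr rfl fun k _ => ?_
        rw [sum_comm]
        exact sum_congr rfl fun l _ => sum_congr rfl fun q _ => by ring
    _ = ∑ k ∈ A, w k ^ 2 := by
        refine sum_congr rfl fun k hk => ?_
        rw [sum_congr rfl fun l hl => by rw [hV k hk l hl]]
        simp [sq, hk]

theorem sum_ite_ne_add [DecidableEq ι] {M : Type*} [AddCommMonoid M] {J : Finset ι} {r : ι}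
    (hr : r ∈ J) (f : ι → M) : (∑ s ∈ J, if r ≠ s then f s else 0) + f r = ∑ s ∈ J, f s := by
  rw [← sum_filter, filter_ne, add_comm, add_sum_erase J f hr]

theorem sum_sq_vecMul_le_of_sum_sq_mulVec_le {S T : Finset ι} (V : ι → ι → ℝ) {C : ℝ} (hC : 0 ≤ C)
    (hV : ∀ x : ι → ℝ, ∑ p ∈ S, (∑ k ∈ T, V p k * x k) ^ 2 ≤ C * ∑ k ∈ T, x k ^ 2)
    (y : ι → ℝ) : ∑ k ∈ T, (∑ p ∈ S, y p * V p k) ^ 2 ≤ C * ∑ p ∈ S, y p ^ 2 := by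
  set z : ι → ℝ := fun k => ∑ p ∈ S, y p * V p k
  set Z := ∑ k ∈ T, z k ^ 2
  have hZ : Z = ∑ p ∈ S, y p * ∑ k ∈ T, V p k * z k := by
    simp only [Z, sq, mul_sum]
    rw [sum_comm]
    exact sum_congr rfl fun k _ => by simp only [z, sum_mul]; exact sum_congr rfl fun p _ => by ring
  have hY : 0 ≤ ∑ p ∈ S, y p ^ 2 := sum_nonneg fun _ _ => sq_nonneg _
  have hZ0 : 0 ≤ Z := sum_nonneg fun _ _ => sq_nonneg _
  have hZsq : Z ^ 2 ≤ (∑ p ∈ S, y p ^ 2) * (C * Z) := by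
    have hCS := sum_mul_sq_le_sq_mul_sq S y fun p => ∑ k ∈ T, V p k * z k
    rw [← hZ] at hCS
    exact hCS.trans (mul_le_mul_of_nonneg_left (hV z) hY)
  by_contra! h
  nlinarith [mul_nonneg hC hY]

theorem sqrt_sum_sq_sub_le (s : Finset ι) (f g : ι → ℝ) :
    √(∑ i ∈ s, f i ^ 2) - √(∑ i ∈ s, g i ^ 2) ≤ √(∑ i ∈ s, (f i + g i) ^ 2) := by
  have hnorm : ∀ h : ι → ℝ,
      ‖WithLp.toLp 2 (fun i : s => h i)‖ = √(∑ i ∈ s, h i ^ 2) := fun h => by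
    rw [EuclideanSpace.norm_eq]
    simp only [Real.norm_eq_abs, sq_abs]
    rw [sum_coe_sort s (fun i => h i ^ 2)]
  have := norm_sub_le (WithLp.toLp 2 (fun i : s => f i + g i)) (WithLp.toLp 2 (fun i : s => g i))
  rw [← WithLp.toLp_sub] at this
  simp only [Pi.sub_def, add_sub_cancel_right] at this
  rw [hnorm f, hnorm g, hnorm fun i => f i + g i] at this
  linarith

end SumsOfSquares

section Blocks

def block (n : ℕ) (c : ℕ → ℕ) (r : ℕ) : Finset (Fin n) := univ.filter fun t => inBlk c r t

variable {n : ℕ} {c : ℕ → ℕ}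

@[simp]
theorem mem_block {r : ℕ} {t : Fin n} : t ∈ block n c r ↔ inBlk c r t := by
  simp [block]

theorem off_add_le_off {r s : ℕ} (h : r < s) : off c r + c r ≤ off c s := by
  rw [off, off, ← sum_range_succ]
  exact sum_le_sum_of_subset (range_subset_range.2 h)

theorem inBlk_unique {r s t : ℕ} (hr : inBlk c r t) (hs : inBlk c s t) : r = s := by
  rcases lt_trichotomy r s with h | h | h
  · have := off_add_le_off (c := c) h; unfold inBlk at hr hs; omega
  · exact h
  · have := off_add_le_off (c := c) h; unfold inBlk at hr hs; omega

theorem disjoint_block {r s : ℕ} (h : r ≠ s) : Disjoint (block n c r) (block n c s) :=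
  disjoint_left.2 fun _ hr hs => h (inBlk_unique (mem_block.1 hr) (mem_block.1 hs))

theorem exists_inBlk_of_lt_off {j t : ℕ} (ht : t < off c j) : ∃ r < j, inBlk c r t := by
  induction j with
  | zero => simp [off] at ht
  | succ j ih =>
    by_cases h : t < off c j
    · obtain ⟨r, hr, hb⟩ := ih h
      exact ⟨r, by omega, hb⟩
    · exact ⟨j, by omega, Nat.le_of_not_lt h, by rwa [off, sum_range_succ] at ht⟩

theorem sum_univ_eq_sum_block {m : ℕ} (hcs : ∑ i ∈ range m, c i = n) {M : Type*}
    [AddCommMonoid M] (g : Fin n → M) : ∑ p, g p = ∑ r ∈ range m, ∑ p ∈ block n c r, g p := by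
  rw [← sum_biUnion fun r _ s _ hrs => disjoint_block hrs]
  congr 1
  ext t
  obtain ⟨r, hr, hb⟩ := exists_inBlk_of_lt_off (c := c) (j := m) (t := t) (by
    rw [off, hcs]; exact t.isLt)
  simpa using ⟨r, hr, hb⟩

end Blocks

section ElementaryMatrices

def pivotZone (n : ℕ) (c : ℕ → ℕ) (i j : ℕ) : Finset (Fin n) := block n c i ∪ block n c j

variable {n : ℕ} {c : ℕ → ℕ} {i j : ℕ} {U : Matrix (Fin n) (Fin n) ℝ}

@[simp]
theorem mem_pivotZone {t : Fin n} : t ∈ pivotZone n c i j ↔ inPiv c i j t := by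
  simp [pivotZone, inPiv]

theorem IsElem.transpose (hE : IsElem c i j U) : IsElem c i j Uᵀ := fun s t h => by
  rw [Matrix.transpose_apply, hE t s (by tauto)]
  simp only [eq_comm]

theorem Orth.transpose (hO : Orth U) : Orth Uᵀ := by
  show Uᵀᵀ * Uᵀ = 1
  rw [Matrix.transpose_transpose]
  exact mul_eq_one_comm.1 hO

theorem IsElem.apply_eq_zero (hE : IsElem c i j U) {Y : Finset (Fin n)}
    (hY : pivotZone n c i j ⊆ Y) {k q : Fin n} (hk : k ∈ Y) (hq : q ∉ Y) : U k q = 0 := by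
  rw [hE k q fun h => hq (hY (mem_pivotZone.2 h.2)), if_neg (by rintro rfl; exact hq hk)]

theorem IsElem.orthonormal_rows (hE : IsElem c i j U) (hO : Orth U) {Y : Finset (Fin n)}
    (hY : pivotZone n c i j ⊆ Y) :
    ∀ k ∈ Y, ∀ l ∈ Y, ∑ q ∈ Y, U k q * U l q = if k = l then 1 else 0 := by
  intro k hk l _
  have hO' : U * Uᵀ = 1 := mul_eq_one_comm.1 hO
  have h := congrFun (congrFun hO' k) l
  rw [Matrix.mul_apply, Matrix.one_apply] at h
  rw [← h]
  refine sum_subset (subset_univ _) fun q _ hq => ?_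
  rw [hE.apply_eq_zero hY hk hq, zero_mul]

theorem IsElem.mul_apply_of_mem (hE : IsElem c i j U) {Y : Finset (Fin n)}
    (hY : pivotZone n c i j ⊆ Y) (M : Matrix (Fin n) (Fin n) ℝ) (p : Fin n) {q : Fin n}
    (hq : q ∈ Y) : (M * U) p q = ∑ l ∈ Y, M p l * U l q := by
  rw [Matrix.mul_apply]
  refine (sum_subset (subset_univ _) fun l _ hl => ?_).symm
  have : Uᵀ q l = 0 := hE.transpose.apply_eq_zero hY hq hl
  rw [Matrix.transpose_apply] at this
  rw [this, mul_zero]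

theorem IsElem.transpose_mul_apply_of_mem (hE : IsElem c i j U) {Y : Finset (Fin n)}
    (hY : pivotZone n c i j ⊆ Y) (M : Matrix (Fin n) (Fin n) ℝ) {p : Fin n} (hp : p ∈ Y)
    (q : Fin n) : (Uᵀ * M) p q = ∑ k ∈ Y, U k p * M k q := by
  rw [Matrix.mul_apply]
  refine (sum_subset (subset_univ _) fun k _ hk => ?_).symm
  have : Uᵀ p k = 0 := hE.transpose.apply_eq_zero hY hp hk
  rw [Matrix.transpose_apply] at this
  rw [Matrix.transpose_apply, this, zero_mul]

theorem IsElem.mul_apply_of_notMem (hE : IsElem c i j U) (M : Matrix (Fin n) (Fin n) ℝ)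
    (p : Fin n) {q : Fin n} (hq : q ∉ pivotZone n c i j) : (M * U) p q = M p q := by
  rw [Matrix.mul_apply, sum_eq_single q]
  · rw [hE q q fun h => hq (mem_pivotZone.2 h.2), if_pos rfl, mul_one]
  · intro l _ hl
    rw [hE l q fun h => hq (mem_pivotZone.2 h.2), if_neg hl, mul_zero]
  · simp

theorem IsElem.transpose_mul_apply_of_notMem (hE : IsElem c i j U)
    (M : Matrix (Fin n) (Fin n) ℝ) {p : Fin n} (hp : p ∉ pivotZone n c i j) (q : Fin n) :
    (Uᵀ * M) p q = M p q := by
  rw [← Matrix.transpose_transpose (Uᵀ * M), Matrix.transpose_mul, Matrix.transpose_transpose,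
    Matrix.transpose_apply, hE.mul_apply_of_notMem _ _ hp, Matrix.transpose_apply]

theorem IsElem.conj_apply_of_notMem (hE : IsElem c i j U) (B : Matrix (Fin n) (Fin n) ℝ)
    {p q : Fin n} (hp : p ∉ pivotZone n c i j) (hq : q ∉ pivotZone n c i j) :
    (Uᵀ * B * U) p q = B p q := by
  rw [hE.mul_apply_of_notMem _ _ hq, hE.transpose_mul_apply_of_notMem _ hp]

theorem IsElem.conj_apply_of_notMem_of_mem (hE : IsElem c i j U) (B : Matrix (Fin n) (Fin n) ℝ)
    {p q : Fin n} (hp : p ∉ pivotZone n c i j) (hq : q ∈ pivotZone n c i j) :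
    (Uᵀ * B * U) p q = ∑ l ∈ pivotZone n c i j, B p l * U l q := by
  rw [hE.mul_apply_of_mem subset_rfl _ _ hq]
  simp only [hE.transpose_mul_apply_of_notMem _ hp]

theorem IsElem.sum_sq_conj (hE : IsElem c i j U) (hO : Orth U) {Y : Finset (Fin n)}
    (hY : pivotZone n c i j ⊆ Y) (B : Matrix (Fin n) (Fin n) ℝ) :
    ∑ p ∈ Y, ∑ q ∈ Y, (Uᵀ * B * U) p q ^ 2 = ∑ p ∈ Y, ∑ q ∈ Y, B p q ^ 2 := by
  have hrows := hE.orthonormal_rows hO hY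
  calc ∑ p ∈ Y, ∑ q ∈ Y, (Uᵀ * B * U) p q ^ 2
      = ∑ q ∈ Y, ∑ p ∈ Y, (∑ k ∈ Y, (B * U) k q * U k p) ^ 2 := by
        rw [sum_comm]
        refine sum_congr rfl fun q _ => sum_congr rfl fun p hp => ?_
        rw [Matrix.mul_assoc, hE.transpose_mul_apply_of_mem hY _ hp]
        simp only [mul_comm]
    _ = ∑ q ∈ Y, ∑ k ∈ Y, (B * U) k q ^ 2 :=
        sum_congr rfl fun q _ => sum_sq_vecMul_eq_of_orthonormal_rows _ _ _ hrows _
    _ = ∑ k ∈ Y, ∑ l ∈ Y, B k l ^ 2 := by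
        rw [sum_comm]
        refine sum_congr rfl fun k _ => ?_
        rw [← sum_sq_vecMul_eq_of_orthonormal_rows _ _ _ hrows (B k)]
        exact sum_congr rfl fun q hq => by rw [hE.mul_apply_of_mem hY _ _ hq]

theorem IsElem.sum_sq_vecMul_eq (hE : IsElem c i j U) (hO : Orth U) {A : Finset (Fin n)}
    (hA : A ⊆ pivotZone n c i j) (w : Fin n → ℝ) :
    ∑ q ∈ pivotZone n c i j, (∑ k ∈ A, w k * U k q) ^ 2 = ∑ k ∈ A, w k ^ 2 :=
  sum_sq_vecMul_eq_of_orthonormal_rows _ _ _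
    (fun k hk l hl => hE.orthonormal_rows hO subset_rfl k (hA hk) l (hA hl)) w

end ElementaryMatrices

section SingularValueBounds

variable {n : ℕ} {c : ℕ → ℕ} {i j : ℕ} {U : Matrix (Fin n) (Fin n) ℝ} {μ : ℝ}

theorem enorm_ite_inBlk (r : ℕ) (f : Fin n → ℝ) :
    enorm (fun t : Fin n => if inBlk c r t then f t else 0) = √(∑ t ∈ block n c r, f t ^ 2) := by
  simp only [enorm, block, sum_filter, ite_pow, ne_eq, OfNat.ofNat_ne_zero, not_false_eq_true,
    zero_pow]

theorem sq_mul_sum_sq_le_of_le_sigmaMinBlk (hμ0 : 0 ≤ μ) {r : ℕ} (hμ : μ ≤ sigmaMinBlk c r U)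
    (x : Fin n → ℝ) :
    μ ^ 2 * ∑ k ∈ block n c r, x k ^ 2 ≤
      ∑ p ∈ block n c r, (∑ k ∈ block n c r, U p k * x k) ^ 2 := by
  set X := ∑ k ∈ block n c r, x k ^ 2
  set Y := ∑ p ∈ block n c r, (∑ k ∈ block n c r, U p k * x k) ^ 2
  have hY : 0 ≤ Y := sum_nonneg fun _ _ => sq_nonneg _
  have hX0 : 0 ≤ X := sum_nonneg fun _ _ => sq_nonneg _
  rcases hX0.eq_or_lt with hX | hX
  · rwa [← hX, mul_zero]
  -- `σ_min` is tested on the normalized restriction of `x` to block `r`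
  set y : Fin n → ℝ := fun t => if inBlk c r t then x t / √X else 0
  have hUy : ∀ p, U.mulVec y p = (∑ k ∈ block n c r, U p k * x k) / √X := fun p => by
    simp only [Matrix.mulVec, dotProduct, y, mul_ite, mul_zero, block, sum_filter, sum_div]
    exact sum_congr rfl fun k _ => by split_ifs <;> ring
  have hy : enorm y = 1 := by
    rw [enorm_ite_inBlk]
    simp only [div_pow, ← sum_div, Real.sq_sqrt hX.le, div_self hX.ne', Real.sqrt_one, X]
  have hUy' : enorm (fun t : Fin n => if inBlk c r t then U.mulVec y t else 0) = √(Y / X) := by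
    rw [enorm_ite_inBlk]
    simp only [hUy, div_pow, ← sum_div, Real.sq_sqrt hX.le, Y]
  have hle : μ ≤ √(Y / X) := by
    refine hμ.trans (csInf_le ⟨0, ?_⟩ ⟨y, fun t ht => if_neg ht, hy, hUy'⟩)
    rintro v ⟨x, -, -, rfl⟩
    exact Real.sqrt_nonneg _
  have := pow_le_pow_left₀ hμ0 hle 2
  rw [Real.sq_sqrt (div_nonneg hY hX.le), le_div_iff₀ hX] at this
  exact this

end SingularValueBounds

section PivotBlockBounds

variable {n : ℕ} {c : ℕ → ℕ} {i j : ℕ} {U : Matrix (Fin n) (Fin n) ℝ} {μ : ℝ}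

theorem IsElem.sum_sq_mulVec_eq (hE : IsElem c i j U) (hO : Orth U) {A : Finset (Fin n)}
    (hA : A ⊆ pivotZone n c i j) (x : Fin n → ℝ) :
    ∑ p ∈ pivotZone n c i j, (∑ k ∈ A, U p k * x k) ^ 2 = ∑ k ∈ A, x k ^ 2 := by
  rw [← hE.transpose.sum_sq_vecMul_eq hO.transpose hA x]
  simp only [Matrix.transpose_apply, mul_comm]

theorem IsElem.sum_sq_vecMul_le (hE : IsElem c i j U) (hO : Orth U) {A S : Finset (Fin n)}
    (hA : A ⊆ pivotZone n c i j) (hS : S ⊆ pivotZone n c i j) (w : Fin n → ℝ) :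
    ∑ q ∈ S, (∑ k ∈ A, w k * U k q) ^ 2 ≤ ∑ k ∈ A, w k ^ 2 :=
  (sum_le_sum_of_subset_of_nonneg hS fun _ _ _ => sq_nonneg _).trans_eq
    (hE.sum_sq_vecMul_eq hO hA w)

/-- Orthogonality of `Û` turns the bound `σ_min(U_ii) ≥ μ` into `‖U_ji‖ ≤ √(1 - μ²)`, hence
`‖U_jiᵀ‖ ≤ √(1 - μ²)`, and then orthogonality again bounds the rows of `U_jj` from below. -/
theorem IsElem.sq_mul_sum_sq_le_sum_sq_vecMul (hE : IsElem c i j U) (hO : Orth U) (hij : i ≠ j)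
    (hμ0 : 0 ≤ μ) (hμ1 : μ ≤ 1) (hμ : μ ≤ sigmaMinBlk c i U) (w : Fin n → ℝ) :
    μ ^ 2 * ∑ k ∈ block n c j, w k ^ 2 ≤
      ∑ q ∈ block n c j, (∑ k ∈ block n c j, w k * U k q) ^ 2 := by
  have hcol : ∀ x : Fin n → ℝ, ∑ p ∈ block n c j, (∑ k ∈ block n c i, U p k * x k) ^ 2 ≤
      (1 - μ ^ 2) * ∑ k ∈ block n c i, x k ^ 2 := fun x => by
    have htot := hE.sum_sq_mulVec_eq hO subset_union_left x
    rw [pivotZone, sum_union (disjoint_block hij)] at htot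
    linarith [sq_mul_sum_sq_le_of_le_sigmaMinBlk hμ0 hμ x]
  have hrow := sum_sq_vecMul_le_of_sum_sq_mulVec_le (fun p k => U p k)
    (by nlinarith) hcol w
  have htot := hE.sum_sq_vecMul_eq hO subset_union_right w
  rw [pivotZone, sum_union (disjoint_block hij)] at htot
  linarith

end PivotBlockBounds

section BlockEnergies

variable {n : ℕ} {c : ℕ → ℕ}

def blockSq (c : ℕ → ℕ) (B : Matrix (Fin n) (Fin n) ℝ) (r s : ℕ) : ℝ :=
  ∑ p ∈ block n c r, ∑ q ∈ block n c s, B p q ^ 2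

def offBlockSq (c : ℕ → ℕ) (B : Matrix (Fin n) (Fin n) ℝ) (J : Finset ℕ) : ℝ :=
  ∑ r ∈ J, ∑ s ∈ J, if r ≠ s then blockSq c B r s else 0

def BlockDiag (c : ℕ → ℕ) (r : ℕ) (B : Matrix (Fin n) (Fin n) ℝ) : Prop :=
  ∀ p ∈ block n c r, ∀ q ∈ block n c r, p ≠ q → B p q = 0

variable {B : Matrix (Fin n) (Fin n) ℝ}

theorem blockSq_nonneg (c : ℕ → ℕ) (B : Matrix (Fin n) (Fin n) ℝ) (r s : ℕ) :
    0 ≤ blockSq c B r s :=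
  sum_nonneg fun _ _ => sum_nonneg fun _ _ => sq_nonneg _

theorem blockSq_comm (hB : B.IsSymm) (r s : ℕ) : blockSq c B r s = blockSq c B s r := by
  rw [blockSq, blockSq, sum_comm]
  simp only [hB.apply]

theorem offBlockSq_nonneg (c : ℕ → ℕ) (B : Matrix (Fin n) (Fin n) ℝ) (J : Finset ℕ) :
    0 ≤ offBlockSq c B J :=
  sum_nonneg fun _ _ => sum_nonneg fun _ _ => by split_ifs <;> simp [blockSq_nonneg]

theorem offBlockSq_eq_sub (J : Finset ℕ) :
    offBlockSq c B J = ∑ r ∈ J, ∑ s ∈ J, blockSq c B r s - ∑ r ∈ J, blockSq c B r r := by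
  rw [eq_sub_iff_add_eq, offBlockSq, ← sum_add_distrib]
  exact sum_congr rfl fun r hr => sum_ite_ne_add hr _

theorem offBlockSq_range_succ (hB : B.IsSymm) (j : ℕ) :
    offBlockSq c B (range (j + 1)) =
      offBlockSq c B (range j) + 2 * ∑ r ∈ range j, blockSq c B r j := by
  simp only [offBlockSq_eq_sub, range_add_one, sum_insert notMem_range_self, sum_add_distrib]
  rw [sum_congr rfl fun s _ => blockSq_comm hB j s]
  ring

theorem sum_sum_blockSq (J : Finset ℕ) :
    ∑ r ∈ J, ∑ s ∈ J, blockSq c B r s =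
      ∑ p ∈ J.biUnion (block n c), ∑ q ∈ J.biUnion (block n c), B p q ^ 2 := by
  have hdisj : (J : Set ℕ).PairwiseDisjoint (block n c) := fun r _ s _ h => disjoint_block h
  simp only [sum_biUnion hdisj, blockSq]
  exact sum_congr rfl fun r _ => sum_comm

end BlockEnergies

section Steps

variable {n : ℕ} {c : ℕ → ℕ} {μ : ℝ}

/-- Of the UBC condition only `σ_min(U_ii) ≥ μ` is kept. -/
def JacobiStep (c : ℕ → ℕ) (μ : ℝ) (i j : ℕ) (B B' : Matrix (Fin n) (Fin n) ℝ) : Prop :=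
  i ≠ j ∧ ∃ U : Matrix (Fin n) (Fin n) ℝ, IsElem c i j U ∧ Orth U ∧ μ ≤ sigmaMinBlk c i U ∧
    B' = Uᵀ * B * U ∧ PivDiag c i j B'

theorem notMem_pivotZone {i j r : ℕ} (hri : r ≠ i) (hrj : r ≠ j) {p : Fin n}
    (hp : p ∈ block n c r) : p ∉ pivotZone n c i j := by
  rw [mem_pivotZone]
  rintro (h | h)
  · exact hri (inBlk_unique (mem_block.1 hp) h)
  · exact hrj (inBlk_unique (mem_block.1 hp) h)

namespace JacobiStep

variable {i j : ℕ} {B B' : Matrix (Fin n) (Fin n) ℝ}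

theorem isSymm (h : JacobiStep c μ i j B B') (hB : B.IsSymm) : B'.IsSymm := by
  obtain ⟨-, U, -, -, -, rfl, -⟩ := h
  simp only [Matrix.IsSymm, Matrix.transpose_mul, Matrix.transpose_transpose, hB.eq,
    Matrix.mul_assoc]

theorem blockSq_eq {r s : ℕ} (h : JacobiStep c μ i j B B') (hri : r ≠ i) (hrj : r ≠ j)
    (hsi : s ≠ i) (hsj : s ≠ j) : blockSq c B' r s = blockSq c B r s := by
  obtain ⟨-, U, hE, -, -, rfl, -⟩ := h
  refine sum_congr rfl fun p hp => sum_congr rfl fun q hq => ?_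
  rw [hE.conj_apply_of_notMem B (notMem_pivotZone hri hrj hp) (notMem_pivotZone hsi hsj hq)]

theorem blockSq_pivot_eq_zero {a b : ℕ} (h : JacobiStep c μ i j B B') (ha : a = i ∨ a = j)
    (hb : b = i ∨ b = j) (hab : a ≠ b) : blockSq c B' a b = 0 := by
  obtain ⟨-, -, -, -, -, -, hPD⟩ := h
  have hpiv : ∀ {r} (t : Fin n), r = i ∨ r = j → t ∈ block n c r → inPiv c i j t := by
    rintro r t (rfl | rfl) ht <;> simp_all [inPiv]
  refine sum_eq_zero fun p hp => sum_eq_zero fun q hq => ?_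
  have hpq : p ≠ q := fun hpq => hab (inBlk_unique (mem_block.1 hp) (mem_block.1 (hpq ▸ hq)))
  rw [hPD p q hpq (hpiv p ha hp) (hpiv q hb hq), sq, zero_mul]

/-- Conjugation preserves the Frobenius norms of the principal submatrices on `J` and on the
pivot pair. -/
theorem offBlockSq_eq (h : JacobiStep c μ i j B B') {J : Finset ℕ} (hi : i ∈ J) (hj : j ∈ J) :
    offBlockSq c B' J = offBlockSq c B J - (blockSq c B i j + blockSq c B j i) := by
  have hij := h.1
  have hframe : ∀ J : Finset ℕ, i ∈ J → j ∈ J →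
      ∑ r ∈ J, ∑ s ∈ J, blockSq c B' r s = ∑ r ∈ J, ∑ s ∈ J, blockSq c B r s := by
    intro J hi hj
    obtain ⟨-, U, hE, hO, -, rfl, -⟩ := h
    rw [sum_sum_blockSq, sum_sum_blockSq, hE.sum_sq_conj hO]
    exact union_subset (subset_biUnion_of_mem _ hi) (subset_biUnion_of_mem _ hj)
  have hpair := hframe {i, j} (mem_insert_self _ _) (mem_insert_of_mem (mem_singleton_self _))
  simp only [sum_pair hij, h.blockSq_pivot_eq_zero (.inl rfl) (.inr rfl) hij,
    h.blockSq_pivot_eq_zero (.inr rfl) (.inl rfl) hij.symm] at hpair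
  have hsub : {i, j} ⊆ J := insert_subset hi (singleton_subset_iff.2 hj)
  have hdiag : ∑ r ∈ J \ {i, j}, blockSq c B' r r = ∑ r ∈ J \ {i, j}, blockSq c B r r :=
    sum_congr rfl fun r hr => by
      simp only [mem_sdiff, mem_insert, mem_singleton, not_or] at hr
      exact h.blockSq_eq hr.2.1 hr.2.2 hr.2.1 hr.2.2
  rw [offBlockSq_eq_sub, offBlockSq_eq_sub, hframe J hi hj,
    ← sum_sdiff hsub (f := fun r => blockSq c B' r r),
    ← sum_sdiff hsub (f := fun r => blockSq c B r r), hdiag, sum_pair hij, sum_pair hij]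
  linarith

theorem offBlockSq_le (h : JacobiStep c μ i j B B') {J : Finset ℕ} (hi : i ∈ J) (hj : j ∈ J) :
    offBlockSq c B' J ≤ offBlockSq c B J := by
  rw [h.offBlockSq_eq hi hj]
  linarith [blockSq_nonneg c B i j, blockSq_nonneg c B j i]

theorem blockDiag {r : ℕ} (h : JacobiStep c μ i j B B') (hr : r = i ∨ r = j ∨ BlockDiag c r B) :
    BlockDiag c r B' := by
  obtain ⟨-, U, hE, -, -, rfl, hPD⟩ := h
  intro p hp q hq hpq
  rcases hr with rfl | rfl | hr
  · exact hPD p q hpq (.inl (mem_block.1 hp)) (.inl (mem_block.1 hq))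
  · exact hPD p q hpq (.inr (mem_block.1 hp)) (.inr (mem_block.1 hq))
  · by_cases hri : r = i
    · exact hPD p q hpq (.inl (mem_block.1 (hri ▸ hp))) (.inl (mem_block.1 (hri ▸ hq)))
    by_cases hrj : r = j
    · exact hPD p q hpq (.inr (mem_block.1 (hrj ▸ hp))) (.inr (mem_block.1 (hrj ▸ hq)))
    rw [hE.conj_apply_of_notMem B (notMem_pivotZone hri hrj hp) (notMem_pivotZone hri hrj hq)]
    exact hr p hp q hq hpq

/-- `B'_rj = B_ri U_ij + B_rj U_jj`, where `U_jj` has singular values at least `μ` and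
`‖U_ij‖ ≤ 1`. -/
theorem mul_sqrt_blockSq_sub_le {r : ℕ} (h : JacobiStep c μ i j B B') (hμ0 : 0 ≤ μ) (hμ1 : μ ≤ 1)
    (hri : r ≠ i) (hrj : r ≠ j) :
    μ * √(blockSq c B r j) - √(blockSq c B r i) ≤ √(blockSq c B' r j) := by
  obtain ⟨hij, U, hE, hO, hμ, rfl, -⟩ := h
  set s := block n c r ×ˢ block n c j
  set f : Fin n × Fin n → ℝ := fun x => ∑ k ∈ block n c j, B x.1 k * U k x.2
  set g : Fin n × Fin n → ℝ := fun x => ∑ k ∈ block n c i, B x.1 k * U k x.2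
  have hsplit : blockSq c (Uᵀ * B * U) r j = ∑ x ∈ s, (f x + g x) ^ 2 := by
    rw [blockSq, sum_product]
    refine sum_congr rfl fun p hp => sum_congr rfl fun q hq => ?_
    rw [hE.conj_apply_of_notMem_of_mem B (notMem_pivotZone hri hrj hp)
      (mem_pivotZone.2 (.inr (mem_block.1 hq))), pivotZone, sum_union (disjoint_block hij),
      add_comm]
  have hf : μ ^ 2 * blockSq c B r j ≤ ∑ x ∈ s, f x ^ 2 := by
    rw [sum_product, blockSq, mul_sum]
    exact sum_le_sum fun p _ =>
      hE.sq_mul_sum_sq_le_sum_sq_vecMul hO hij hμ0 hμ1 hμ (B p)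
  have hg : ∑ x ∈ s, g x ^ 2 ≤ blockSq c B r i := by
    rw [sum_product, blockSq]
    exact sum_le_sum fun p _ =>
      hE.sum_sq_vecMul_le hO subset_union_left subset_union_right (B p)
  have hf' : μ * √(blockSq c B r j) ≤ √(∑ x ∈ s, f x ^ 2) := by
    simpa [Real.sqrt_mul (sq_nonneg μ), Real.sqrt_sq hμ0] using Real.sqrt_le_sqrt hf
  rw [hsplit]
  linarith [sqrt_sum_sq_sub_le s f g, Real.sqrt_le_sqrt hg]

end JacobiStep

end Steps

section Runs

variable {n : ℕ} {c : ℕ → ℕ} {μ : ℝ}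

def IsRun (c : ℕ → ℕ) (μ : ℝ) (L : List (ℕ × ℕ)) (B : ℕ → Matrix (Fin n) (Fin n) ℝ) : Prop :=
  ∀ k (hk : k < L.length), JacobiStep c μ L[k].1 L[k].2 (B k) (B (k + 1))

namespace IsRun

variable {L : List (ℕ × ℕ)} {B : ℕ → Matrix (Fin n) (Fin n) ℝ}

theorem append_iff {L₁ L₂ : List (ℕ × ℕ)} :
    IsRun c μ (L₁ ++ L₂) B ↔ IsRun c μ L₁ B ∧ IsRun c μ L₂ fun k => B (L₁.length + k) := by
  refine ⟨fun h => ⟨fun k hk => ?_, fun k hk => ?_⟩, fun ⟨h₁, h₂⟩ k hk => ?_⟩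
  · have := h k (by simp; omega)
    rwa [List.getElem_append_left hk] at this
  · have := h (L₁.length + k) (by simp; omega)
    rw [List.getElem_append_right (by omega)] at this
    simpa [Nat.add_assoc] using this
  · by_cases hk₁ : k < L₁.length
    · rw [List.getElem_append_left hk₁]
      exact h₁ k hk₁
    · obtain ⟨d, rfl⟩ := Nat.exists_eq_add_of_le (not_lt.1 hk₁)
      rw [List.getElem_append_right (by omega)]
      simpa [Nat.add_assoc] using h₂ d (by simp at hk; omega)

theorem isSymm (h : IsRun c μ L B) (hB : (B 0).IsSymm) : ∀ k ≤ L.length, (B k).IsSymm := by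
  intro k hk
  induction k with
  | zero => exact hB
  | succ k ih => exact (h k hk).isSymm (ih (by omega))

theorem offBlockSq_le (h : IsRun c μ L B) {J : Finset ℕ} (hJ : ∀ p ∈ L, p.1 ∈ J ∧ p.2 ∈ J) :
    ∀ k ≤ L.length, offBlockSq c (B k) J ≤ offBlockSq c (B 0) J := by
  intro k hk
  induction k with
  | zero => exact le_rfl
  | succ k ih =>
    have hp := hJ _ (List.getElem_mem (by omega : k < L.length))
    exact ((h k hk).offBlockSq_le hp.1 hp.2).trans (ih (by omega))

theorem blockDiag (h : IsRun c μ L B) {r : ℕ} (hr : ∃ p ∈ L, p.1 = r ∨ p.2 = r) :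
    BlockDiag c r (B L.length) := by
  obtain ⟨p, hp, hpr⟩ := hr
  obtain ⟨k, hk, rfl⟩ := List.mem_iff_getElem.1 hp
  have : ∀ d, k + 1 + d ≤ L.length → BlockDiag c r (B (k + 1 + d)) := by
    intro d hd
    induction d with
    | zero => exact (h k hk).blockDiag (by tauto)
    | succ d ih => exact (h (k + 1 + d) (by omega)).blockDiag (.inr (.inr (ih (by omega))))
  simpa [show k + 1 + (L.length - (k + 1)) = L.length by omega] using
    this (L.length - (k + 1)) (by omega)

end IsRun

end Runs

section ColumnPhase

variable {n : ℕ} {c : ℕ → ℕ} {μ : ℝ}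

theorem sum_range_comp_of_bijOn {M : Type*} [AddCommMonoid M] {j : ℕ} {τ : ℕ → ℕ}
    (hτ : Set.BijOn τ (Set.Iio j) (Set.Iio j)) (g : ℕ → M) :
    ∑ b ∈ range j, g (τ b) = ∑ r ∈ range j, g r :=
  sum_nbij τ (fun b hb => by simpa using hτ.mapsTo (by simpa using hb))
    (by simpa using hτ.injOn) (by simpa using hτ.surjOn) fun _ _ => rfl

def IsColumnPhase (c : ℕ → ℕ) (μ : ℝ) (τ : ℕ → ℕ) (j : ℕ)
    (B : ℕ → Matrix (Fin n) (Fin n) ℝ) : Prop :=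
  ∀ b < j, JacobiStep c μ (τ b) j (B b) (B (b + 1))

theorem isRun_map_range_iff {τ : ℕ → ℕ} {j : ℕ} {B : ℕ → Matrix (Fin n) (Fin n) ℝ} :
    IsRun c μ ((List.range j).map fun a => (τ a, j)) B ↔ IsColumnPhase c μ τ j B := by
  simp [IsRun, IsColumnPhase]

namespace IsColumnPhase

variable {τ : ℕ → ℕ} {j : ℕ} {B : ℕ → Matrix (Fin n) (Fin n) ℝ}

theorem offBlockSq_eq (h : IsColumnPhase c μ τ j B) {J : Finset ℕ} (hτJ : ∀ b < j, τ b ∈ J)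
    (hjJ : j ∈ J) : ∀ t ≤ j, offBlockSq c (B t) J = offBlockSq c (B 0) J -
      ∑ b ∈ range t, (blockSq c (B b) (τ b) j + blockSq c (B b) j (τ b)) := by
  intro t ht
  induction t with
  | zero => simp
  | succ t ih =>
    rw [(h t ht).offBlockSq_eq (hτJ t ht) hjJ, ih (by omega), sum_range_succ]
    ring

theorem blockSq_eq (h : IsColumnPhase c μ τ j B) {r s : ℕ} (hrj : r ≠ j) (hsj : s ≠ j) :
    ∀ t ≤ j, (∀ e < t, τ e ≠ r ∧ τ e ≠ s) → blockSq c (B t) r s = blockSq c (B 0) r s := by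
  intro t ht hτ
  induction t with
  | zero => rfl
  | succ t ih =>
    have hτt := hτ t (by omega)
    rw [(h t ht).blockSq_eq hτt.1.symm hrj hτt.2.symm hsj,
      ih (by omega) fun e he => hτ e (by omega)]

/-- Before row `τ a` is pivoted, the block `(τ a, j)` loses at most a factor `μ` per step, up to
the norm of the untouched block `(τ a, τ e)` mixed into it at step `e`. -/
theorem pow_mul_sqrt_blockSq_le (h : IsColumnPhase c μ τ j B)
    (hτ : Set.BijOn τ (Set.Iio j) (Set.Iio j)) (hμ0 : 0 ≤ μ) (hμ1 : μ ≤ 1) {a : ℕ} (ha : a < j) :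
    ∀ t ≤ a, μ ^ t * √(blockSq c (B 0) (τ a) j) ≤
      √(blockSq c (B t) (τ a) j) + ∑ e ∈ range t, √(blockSq c (B 0) (τ a) (τ e)) := by
  have hτne : ∀ {b e}, b < j → e < j → b ≠ e → τ b ≠ τ e := fun hb he hbe hτbe =>
    hbe (hτ.injOn (Set.mem_Iio.2 hb) (Set.mem_Iio.2 he) hτbe)
  have hτlt : ∀ {b}, b < j → τ b < j := fun hb => hτ.mapsTo (Set.mem_Iio.2 hb)
  intro t ht
  induction t with
  | zero => simp
  | succ t ih =>
    have hstep := (h t (by omega)).mul_sqrt_blockSq_sub_le hμ0 hμ1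
      (hτne ha (by omega) (by omega)) (hτlt ha).ne
    have hfixed : blockSq c (B t) (τ a) (τ t) = blockSq c (B 0) (τ a) (τ t) :=
      h.blockSq_eq (hτlt ha).ne (hτlt (by omega)).ne t (by omega) fun e he =>
        ⟨hτne (by omega) ha (by omega), hτne (by omega) (by omega) (by omega)⟩
    have hS : 0 ≤ ∑ e ∈ range t, √(blockSq c (B 0) (τ a) (τ e)) :=
      sum_nonneg fun _ _ => Real.sqrt_nonneg _
    rw [sum_range_succ, pow_succ', mul_assoc, ← hfixed]
    nlinarith [mul_le_mul_of_nonneg_left (ih (by omega)) hμ0]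


/-- Squaring the descent estimate at the moment row `τ b` is pivoted, with Cauchy–Schwarz on the
sum of the untouched blocks. -/
theorem pow_mul_blockSq_le (h : IsColumnPhase c μ τ j B) (hτ : Set.BijOn τ (Set.Iio j) (Set.Iio j))
    (hμ0 : 0 ≤ μ) (hμ1 : μ ≤ 1) {b : ℕ} (hb : b < j) :
    μ ^ (2 * j) * blockSq c (B 0) (τ b) j ≤ 2 * blockSq c (B b) (τ b) j +
      2 * j * ∑ s ∈ range j, if τ b ≠ s then blockSq c (B 0) (τ b) s else 0 := by
  set S := ∑ e ∈ range b, √(blockSq c (B 0) (τ b) (τ e))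
  have hS : S ^ 2 ≤ j * ∑ s ∈ range j, if τ b ≠ s then blockSq c (B 0) (τ b) s else 0 := by
    have hτne : ∀ e < b, τ b ≠ τ e := fun e he hτbe =>
      (show b ≠ e by omega) (hτ.injOn (Set.mem_Iio.2 hb) (Set.mem_Iio.2 (by omega)) hτbe)
    calc S ^ 2 ≤ b * ∑ e ∈ range b, blockSq c (B 0) (τ b) (τ e) := by
          simpa [Real.sq_sqrt (blockSq_nonneg _ _ _ _)] using
            sq_sum_le_card_mul_sum_sq (s := range b) (f := fun e => √(blockSq c (B 0) (τ b) (τ e)))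
      _ ≤ j * ∑ e ∈ range b, if τ b ≠ τ e then blockSq c (B 0) (τ b) (τ e) else 0 := by
          rw [sum_congr rfl fun e he => if_pos (hτne e (mem_range.1 he))]
          exact mul_le_mul_of_nonneg_right (by exact_mod_cast hb.le)
            (sum_nonneg fun _ _ => blockSq_nonneg _ _ _ _)
      _ ≤ j * ∑ e ∈ range j, if τ b ≠ τ e then blockSq c (B 0) (τ b) (τ e) else 0 := by
          refine mul_le_mul_of_nonneg_left (sum_le_sum_of_subset_of_nonneg
            (range_subset_range.2 hb.le) fun e _ _ => ?_) (Nat.cast_nonneg j)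
          split_ifs <;> simp [blockSq_nonneg]
      _ = _ := by
          rw [sum_range_comp_of_bijOn hτ fun s => if τ b ≠ s then blockSq c (B 0) (τ b) s else 0]
  have hdesc : μ ^ j * √(blockSq c (B 0) (τ b) j) ≤ √(blockSq c (B b) (τ b) j) + S :=
    (mul_le_mul_of_nonneg_right (pow_le_pow_of_le_one hμ0 hμ1 hb.le) (Real.sqrt_nonneg _)).trans
      (h.pow_mul_sqrt_blockSq_le hτ hμ0 hμ1 hb b le_rfl)
  have hsq := pow_le_pow_left₀ (by positivity) hdesc 2
  rw [mul_pow, ← pow_mul, mul_comm j 2, Real.sq_sqrt (blockSq_nonneg _ _ _ _)] at hsq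
  nlinarith [sq_nonneg (√(blockSq c (B b) (τ b) j) - S),
    Real.sq_sqrt (blockSq_nonneg c (B b) (τ b) j)]

/-- Over the column-`j` phase, the energy coupling block column `j` to the earlier blocks is
controlled by the energy annihilated in the phase and the energy among the earlier blocks. -/
theorem pow_mul_offBlockSq_sub_le (h : IsColumnPhase c μ τ j B)
    (hτ : Set.BijOn τ (Set.Iio j) (Set.Iio j)) (hμ0 : 0 ≤ μ) (hμ1 : μ ≤ 1) (hB : (B 0).IsSymm)
    {J : Finset ℕ} (hJ : range (j + 1) ⊆ J) :
    μ ^ (2 * j) * (offBlockSq c (B 0) (range (j + 1)) - offBlockSq c (B 0) (range j)) ≤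
      2 * (offBlockSq c (B 0) J - offBlockSq c (B j) J) + 4 * j * offBlockSq c (B 0) (range j) := by
  have hτJ : ∀ b < j, τ b ∈ J := fun b hb =>
    hJ (mem_range.2 (Nat.lt_succ_of_lt (hτ.mapsTo (Set.mem_Iio.2 hb))))
  have hloss : offBlockSq c (B 0) J - offBlockSq c (B j) J =
      2 * ∑ b ∈ range j, blockSq c (B b) (τ b) j := by
    rw [h.offBlockSq_eq hτJ (hJ (self_mem_range_succ j)) j le_rfl, mul_sum, sub_sub_cancel]
    refine sum_congr rfl fun b hb => ?_
    rw [blockSq_comm ((isRun_map_range_iff.2 h).isSymm hB b (by simp at hb ⊢; omega)) j]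
    ring
  have hsum := sum_le_sum fun b hb => h.pow_mul_blockSq_le hτ hμ0 hμ1 (mem_range.1 hb)
  rw [← mul_sum, sum_add_distrib, ← mul_sum, ← mul_sum,
    sum_range_comp_of_bijOn hτ fun r => blockSq c (B 0) r j,
    sum_range_comp_of_bijOn hτ fun r => ∑ s ∈ range j, if r ≠ s then blockSq c (B 0) r s else 0]
    at hsum
  rw [offBlockSq_range_succ hB, hloss]
  have : ∑ r ∈ range j, ∑ s ∈ range j, (if r ≠ s then blockSq c (B 0) r s else 0) =
    offBlockSq c (B 0) (range j) := rfl
  nlinarith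

end IsColumnPhase

end ColumnPhase

section Columns

variable {n m : ℕ} {c : ℕ → ℕ} {μ : ℝ}

theorem lt_and_le_of_mem_column {τ : ℕ → ℕ} {j : ℕ} {E : List (ℕ × ℕ)}
    (hτ : Set.BijOn τ (Set.Iio j) (Set.Iio j)) (hE : ∀ p ∈ E, p.1 < p.2 ∧ p.2 ≤ j) :
    ∀ p ∈ (List.range j).map (fun a => (τ a, j)) ++ E, p.1 < p.2 ∧ p.2 ≤ j := by
  intro p hp
  simp only [List.mem_append, List.mem_map, List.mem_range] at hp
  rcases hp with ⟨b, hb, rfl⟩ | hp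
  · exact ⟨hτ.mapsTo (Set.mem_Iio.2 hb), le_rfl⟩
  · exact hE p hp

theorem IsRun.pow_mul_offBlockSq_le_of_column {τ : ℕ → ℕ} {j : ℕ} {E : List (ℕ × ℕ)}
    {B : ℕ → Matrix (Fin n) (Fin n) ℝ}
    (h : IsRun c μ ((List.range j).map (fun a => (τ a, j)) ++ E) B)
    (hτ : Set.BijOn τ (Set.Iio j) (Set.Iio j)) (hE : ∀ p ∈ E, p.1 < p.2 ∧ p.2 ≤ j)
    (hμ0 : 0 ≤ μ) (hμ1 : μ ≤ 1) (hjm : j < m) (hjn : j ≤ n) (hB : (B 0).IsSymm) :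
    μ ^ (2 * n) * offBlockSq c (B (j + E.length)) (range (j + 1)) ≤
      (4 * n + 2) * (offBlockSq c (B 0) (range j) +
        (offBlockSq c (B 0) (range m) - offBlockSq c (B (j + E.length)) (range m))) := by
  have hlen : ((List.range j).map (fun a => (τ a, j)) ++ E).length = j + E.length := by simp
  have hpiv : ∀ k, ∀ p ∈ (List.range j).map (fun a => (τ a, j)) ++ E,
      j < k → p.1 ∈ range k ∧ p.2 ∈ range k := fun k p hp hjk => by
    have := lt_and_le_of_mem_column hτ hE p hp
    exact ⟨mem_range.2 (by omega), mem_range.2 (by omega)⟩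
  have hphase := (isRun_map_range_iff.1 (IsRun.append_iff.1 h).1).pow_mul_offBlockSq_sub_le hτ
    hμ0 hμ1 hB (J := range m) (range_subset_range.2 hjm)
  have hend := h.offBlockSq_le (fun p hp => hpiv (j + 1) p hp (by omega)) _ hlen.ge
  have hrest := (IsRun.append_iff.1 h).2.offBlockSq_le (J := range m)
    (fun p hp => hpiv m p (List.mem_append_right _ hp) hjm) E.length le_rfl
  simp only [List.length_map, List.length_range, add_zero] at hend hrest
  have hall := h.offBlockSq_le (fun p hp => hpiv m p hp hjm) _ hlen.ge
  have hμj : μ ^ (2 * n) ≤ μ ^ (2 * j) := pow_le_pow_of_le_one hμ0 hμ1 (by omega)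
  have hP := offBlockSq_nonneg c (B 0) (range j)
  have h₁ := mul_le_mul_of_nonneg_right hμj (offBlockSq_nonneg c (B (j + E.length)) (range (j + 1)))
  have h₂ := mul_le_mul_of_nonneg_left hend (pow_nonneg hμ0 (2 * j))
  have h₃ := mul_le_of_le_one_left hP (pow_le_one₀ hμ0 hμ1 (n := 2 * j))
  have h₄ := mul_le_mul_of_nonneg_right (by exact_mod_cast hjn : (j : ℝ) ≤ n) hP
  have h₅ := mul_nonneg (Nat.cast_nonneg n) (sub_nonneg.2 hall)
  linarith

end Columns

section Sweeps

variable {n m : ℕ} {c : ℕ → ℕ} {μ : ℝ}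

def columnFactor (n : ℕ) (μ : ℝ) : ℝ := (4 * n + 2) / μ ^ (2 * n)

theorem columnFactor_nonneg (n : ℕ) {μ : ℝ} (hμ : 0 ≤ μ) : 0 ≤ columnFactor n μ := by
  unfold columnFactor
  positivity

def columnsList (τ : ℕ → ℕ → ℕ) (E : ℕ → List (ℕ × ℕ)) (s k : ℕ) : List (ℕ × ℕ) :=
  (List.range' s k).flatMap fun j =>
    (List.range j).map (fun a => (τ j a, j)) ++ (if j = 1 then [] else E j)

theorem le_pow_succ_sub_one_mul {K a a' d d' : ℝ} (t : ℕ) (hK : 0 ≤ K) (hd : 0 ≤ d)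
    (hdd' : d ≤ d') (ha : a ≤ ((K + 1) ^ t - 1) * d) (ha' : a' ≤ K * (a + (d' - d))) :
    a' ≤ ((K + 1) ^ (t + 1) - 1) * d' := by
  have h1 : 1 ≤ (K + 1) ^ t := one_le_pow₀ (by linarith)
  have h2 : a + (d' - d) ≤ (K + 1) ^ t * d' := by nlinarith
  calc a' ≤ K * ((K + 1) ^ t * d') := ha'.trans (mul_le_mul_of_nonneg_left h2 hK)
    _ ≤ ((K + 1) ^ (t + 1) - 1) * d' := by
        rw [pow_succ]
        nlinarith [mul_nonneg (sub_nonneg.2 h1) (hd.trans hdd')]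

/-- `W` is the energy at the start of the sweep, so `W - offBlockSq c (B 0) (range m)` is the
energy annihilated before column `t + 1`. -/
theorem offBlockSq_le_of_isRun_columnsList {τ : ℕ → ℕ → ℕ} {E : ℕ → List (ℕ × ℕ)}
    (hτ : ∀ j, Set.BijOn (τ j) (Set.Iio j) (Set.Iio j)) (hE : ∀ j, ∀ p ∈ E j, p.1 < p.2 ∧ p.2 ≤ j)
    (hμ0 : 0 < μ) (hμ1 : μ ≤ 1) (hmn : m ≤ n) (W : ℝ) :
    ∀ k t (B : ℕ → Matrix (Fin n) (Fin n) ℝ), t + 1 + k = m →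
      IsRun c μ (columnsList τ E (t + 1) k) B → (B 0).IsSymm →
      offBlockSq c (B 0) (range m) ≤ W →
      offBlockSq c (B 0) (range (t + 1)) ≤
        ((columnFactor n μ + 1) ^ t - 1) * (W - offBlockSq c (B 0) (range m)) →
      offBlockSq c (B (columnsList τ E (t + 1) k).length) (range m) ≤
        ((columnFactor n μ + 1) ^ (m - 1) - 1) *
          (W - offBlockSq c (B (columnsList τ E (t + 1) k).length) (range m)) := by
  intro k
  induction k with
  | zero =>
    intro t B htm _ _ _ hpot
    obtain rfl : t = m - 1 := by omega
    simpa [columnsList, show m - 1 + 1 = m by omega] using hpot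
  | succ k ih =>
    intro t B htm h hB hW hpot
    have hsplit : columnsList τ E (t + 1) (k + 1) =
        ((List.range (t + 1)).map (fun a => (τ (t + 1) a, t + 1)) ++
          (if t + 1 = 1 then [] else E (t + 1))) ++ columnsList τ E (t + 1 + 1) k := by
      simp [columnsList, List.range'_succ]
    set E' := if t + 1 = 1 then [] else E (t + 1)
    set col := (List.range (t + 1)).map (fun a => (τ (t + 1) a, t + 1)) ++ E'
    rw [hsplit, IsRun.append_iff] at h
    rw [hsplit, List.length_append]
    have hE' : ∀ p ∈ E', p.1 < p.2 ∧ p.2 ≤ t + 1 := by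
      simp only [E']
      split_ifs
      · simp
      · exact hE (t + 1)
    have hlen : col.length = t + 1 + E'.length := by simp [col]
    have hcol := h.1.pow_mul_offBlockSq_le_of_column (m := m) (hτ (t + 1)) hE' hμ0.le hμ1
      (by omega) (by omega) hB
    have hmono := h.1.offBlockSq_le (J := range m) (fun p hp => by
      have := lt_and_le_of_mem_column (hτ (t + 1)) hE' p hp
      exact ⟨mem_range.2 (by omega), mem_range.2 (by omega)⟩) _ le_rfl
    rw [← hlen] at hcol
    have hstep : offBlockSq c (B col.length) (range (t + 1 + 1)) ≤
        columnFactor n μ * (offBlockSq c (B 0) (range (t + 1)) +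
          ((W - offBlockSq c (B col.length) (range m)) - (W - offBlockSq c (B 0) (range m)))) := by
      rw [columnFactor, div_mul_eq_mul_div, le_div_iff₀ (pow_pos hμ0 _), sub_sub_sub_cancel_left]
      linarith
    have key := ih (t + 1) (fun i => B (col.length + i)) (by omega) h.2
    simp only [add_zero] at key
    exact key (h.1.isSymm hB _ le_rfl) (hmono.trans hW)
      (le_pow_succ_sub_one_mul t (columnFactor_nonneg n hμ0.le) (by linarith) (by linarith)
        hpot hstep)

end Sweeps

section OffNorm

variable {n m : ℕ} {c : ℕ → ℕ} {M : Matrix (Fin n) (Fin n) ℝ}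

theorem two_mul_offSq_eq (hcs : ∑ i ∈ range m, c i = n) (hM : M.IsSymm) :
    2 * offSq M = offBlockSq c M (range m) +
      ∑ r ∈ range m, ∑ p ∈ block n c r, ∑ q ∈ block n c r, if p ≠ q then M p q ^ 2 else 0 := by
  have hswap : offSq M = ∑ p : Fin n, ∑ q : Fin n, if (q : ℕ) < p then M p q ^ 2 else 0 := by
    rw [offSq, sum_comm]
    exact sum_congr rfl fun p _ => sum_congr rfl fun q _ => by rw [hM.apply p q]
  have hsym : 2 * offSq M = ∑ p : Fin n, ∑ q : Fin n, if p ≠ q then M p q ^ 2 else 0 := by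
    rw [two_mul]
    nth_rewrite 2 [hswap]
    rw [offSq, ← sum_add_distrib]
    refine sum_congr rfl fun p _ => ?_
    rw [← sum_add_distrib]
    refine sum_congr rfl fun q _ => ?_
    rcases lt_trichotomy (p : ℕ) q with h | h | h
    · simp [h, h.not_gt, Fin.ne_of_lt h]
    · simp [Fin.ext h]
    · simp [h, h.not_gt, Fin.ne_of_gt h]
  have hblocks : ∀ r ∈ range m, ∀ s ∈ range m, r ≠ s →
      ∑ p ∈ block n c r, ∑ q ∈ block n c s, (if p ≠ q then M p q ^ 2 else 0) =
        blockSq c M r s := fun r _ s _ hrs =>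
    sum_congr rfl fun p hp => sum_congr rfl fun q hq =>
      if_pos (by rintro rfl; exact disjoint_left.1 (disjoint_block hrs) hp hq)
  rw [hsym, sum_univ_eq_sum_block hcs, offBlockSq, ← sum_add_distrib]
  refine sum_congr rfl fun r hr => ?_
  simp_rw [sum_univ_eq_sum_block hcs (fun q => if _ ≠ q then M _ q ^ 2 else 0)]
  rw [sum_comm, ← sum_ite_ne_add hr]
  congr 1
  refine sum_congr rfl fun s hs => ?_
  split_ifs with hrs
  · exact hblocks r hr s hs hrs
  · rfl

theorem offBlockSq_le_two_mul_offSq (hcs : ∑ i ∈ range m, c i = n) (hM : M.IsSymm) :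
    offBlockSq c M (range m) ≤ 2 * offSq M := by
  rw [two_mul_offSq_eq hcs hM, le_add_iff_nonneg_right]
  exact sum_nonneg fun _ _ => sum_nonneg fun _ _ => sum_nonneg fun _ _ => by
    split_ifs <;> positivity

theorem two_mul_offSq_eq_offBlockSq (hcs : ∑ i ∈ range m, c i = n) (hM : M.IsSymm)
    (hD : ∀ r < m, BlockDiag c r M) : 2 * offSq M = offBlockSq c M (range m) := by
  rw [two_mul_offSq_eq hcs hM, add_eq_left]
  refine sum_eq_zero fun r hr => sum_eq_zero fun p hp => sum_eq_zero fun q hq => ?_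
  split_ifs with hpq
  · rw [hD r (mem_range.1 hr) p hp q hq hpq, sq, zero_mul]
  · rfl

end OffNorm

section Constants

/-- The smallest value of `γ_ij` over all partitions of `n`. -/
def gammaMin (n : ℕ) : ℝ := 3 / √(((4 : ℝ) ^ n + 6 * n - 1) * (n + 1))

theorem gammaMin_pos {n : ℕ} (hn : 1 ≤ n) : 0 < gammaMin n := by
  have : (4 : ℝ) ≤ 4 ^ n := le_self_pow₀ (by norm_num) (by omega)
  exact div_pos (by norm_num) (Real.sqrt_pos.2
    (mul_pos (by linarith [(Nat.cast_nonneg n : (0 : ℝ) ≤ n)]) (by positivity)))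

theorem gammaMin_le_one {n : ℕ} (hn : 1 ≤ n) : gammaMin n ≤ 1 := by
  have h4 : (4 : ℝ) ≤ 4 ^ n := le_self_pow₀ (by norm_num) (by omega)
  have hn' : (1 : ℝ) ≤ n := by exact_mod_cast hn
  have h3 : 3 ≤ √(((4 : ℝ) ^ n + 6 * n - 1) * (n + 1)) :=
    Real.le_sqrt_of_sq_le (by nlinarith)
  rw [gammaMin, div_le_one (by linarith)]
  exact h3

theorem gammaMin_le_gammaUBC {n : ℕ} {c : ℕ → ℕ} {i j : ℕ} (hci : c i ≤ n) (hcj : c j ≤ n)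
    (hcj1 : 1 ≤ c j) : gammaMin n ≤ gammaUBC c i j := by
  have hcj' : (1 : ℝ) ≤ c j := by exact_mod_cast hcj1
  have hcjn : (c j : ℝ) ≤ n := by exact_mod_cast hcj
  have h4 : (1 : ℝ) ≤ 4 ^ c i := one_le_pow₀ (by norm_num)
  have h4n : (4 : ℝ) ^ c i ≤ 4 ^ n := pow_le_pow_right₀ (by norm_num) hci
  refine div_le_div_of_nonneg_left (by norm_num)
    (Real.sqrt_pos.2 (mul_pos (by linarith) (by linarith))) ?_
  exact Real.sqrt_le_sqrt (mul_le_mul (by linarith) (by linarith) (by linarith) (by linarith))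

def sweepRate (n : ℕ) (ρ : ℝ) : ℝ := 1 - 1 / (columnFactor n (ρ * gammaMin n) + 1) ^ n

theorem sweepRate_nonneg {n : ℕ} {ρ : ℝ} (hn : 1 ≤ n) (hρ : 0 < ρ) : 0 ≤ sweepRate n ρ := by
  have hK := columnFactor_nonneg n (mul_pos hρ (gammaMin_pos hn)).le
  rw [sweepRate, sub_nonneg]
  have hX : 1 ≤ (columnFactor n (ρ * gammaMin n) + 1) ^ n := one_le_pow₀ (by linarith)
  exact div_le_one_of_le₀ hX (by linarith)

theorem sweepRate_lt_one {n : ℕ} {ρ : ℝ} (hn : 1 ≤ n) (hρ : 0 < ρ) : sweepRate n ρ < 1 := by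
  have hK := columnFactor_nonneg n (mul_pos hρ (gammaMin_pos hn)).le
  rw [sweepRate, sub_lt_self_iff]
  exact one_div_pos.2 (pow_pos (by linarith) n)

theorem le_one_sub_div_mul {x W P Q : ℝ} (hP : 1 ≤ P) (hPQ : P ≤ Q) (hW : 0 ≤ W)
    (h : x ≤ (P - 1) * (W - x)) : x ≤ (1 - 1 / Q) * W := by
  have hP0 : 0 < P := by linarith
  calc x ≤ (1 - 1 / P) * W := by
        rw [one_sub_div hP0.ne', div_mul_eq_mul_div, le_div_iff₀ hP0]
        linarith
    _ ≤ (1 - 1 / Q) * W :=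
        mul_le_mul_of_nonneg_right (by linarith [one_div_le_one_div_of_le hP0 hPQ]) hW

end Constants

section QuasiCyclicSweep

variable {n m : ℕ} {c : ℕ → ℕ}

theorem lt_of_mem_columnsList {τ : ℕ → ℕ → ℕ} {E : ℕ → List (ℕ × ℕ)}
    (hτ : ∀ j, Set.BijOn (τ j) (Set.Iio j) (Set.Iio j)) (hE : ∀ j, ∀ p ∈ E j, p.1 < p.2 ∧ p.2 ≤ j)
    {p : ℕ × ℕ} (hp : p ∈ columnsList τ E 1 (m - 1)) : p.1 < p.2 ∧ p.2 < m := by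
  obtain ⟨j, hj, hpj⟩ := List.mem_flatMap.1 hp
  have hE' : ∀ p ∈ (if j = 1 then [] else E j), p.1 < p.2 ∧ p.2 ≤ j := by
    split_ifs
    · simp
    · exact hE j
  have := lt_and_le_of_mem_column (hτ j) hE' p hpj
  have := List.mem_range'_1.1 hj
  omega

theorem exists_mem_columnsList {τ : ℕ → ℕ → ℕ} {E : ℕ → List (ℕ × ℕ)}
    (hτ : ∀ j, Set.BijOn (τ j) (Set.Iio j) (Set.Iio j)) (hm : 2 ≤ m) {r : ℕ} (hr : r < m) :
    ∃ p ∈ columnsList τ E 1 (m - 1), p.1 = r ∨ p.2 = r := by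
  have hcol : ∀ j, 1 ≤ j → j < m → (τ j 0, j) ∈ columnsList τ E 1 (m - 1) := fun j hj1 hjm =>
    List.mem_flatMap.2 ⟨j, List.mem_range'_1.2 ⟨hj1, by omega⟩,
      List.mem_append_left _ (List.mem_map.2 ⟨0, List.mem_range.2 (by omega), rfl⟩)⟩
  rcases Nat.eq_zero_or_pos r with rfl | hr0
  · exact ⟨_, hcol 1 le_rfl (by omega), .inl (by simpa using hτ 1 |>.mapsTo (by simp))⟩
  · exact ⟨_, hcol r hr0 hr, .inr rfl⟩

theorem Sweep.exists_isRun {ρ μ : ℝ} {L : List (ℕ × ℕ)} {A A' : Matrix (Fin n) (Fin n) ℝ}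
    (h : Sweep c ρ L A A') (hL : ∀ p ∈ L, p.1 ≠ p.2 ∧ μ ≤ ρ * gammaUBC c p.1 p.2) :
    ∃ B : ℕ → Matrix (Fin n) (Fin n) ℝ, B 0 = A ∧ B L.length = A' ∧ IsRun c μ L B := by
  obtain ⟨B, h0, hend, hstep⟩ := h
  refine ⟨B, h0, hend, fun k hk => ?_⟩
  obtain ⟨U, ⟨hE, hO, -, hσ⟩, hBk, hPD⟩ := hstep k hk
  have hp := hL _ (List.getElem_mem hk)
  simp only [List.get_eq_getElem] at hE hσ hBk hPD
  exact ⟨hp.1, U, hE, hO, hp.2.trans hσ, hBk, hPD⟩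

theorem IsPartition.le {n m : ℕ} {c : ℕ → ℕ} (hπ : IsPartition n m c) : m ≤ n := by
  obtain ⟨-, hc1, hcs⟩ := hπ
  simpa [← hcs] using card_nsmul_le_sum (range m) c 1 fun i hi => hc1 i (mem_range.1 hi)

theorem offSq_le_of_sweep {ρ : ℝ} {L : List (ℕ × ℕ)} {A A' : Matrix (Fin n) (Fin n) ℝ}
    (hπ : IsPartition n m c) (hρ0 : 0 < ρ) (hρ1 : ρ ≤ 1) (hL : memBcQ m L) (hA : A.IsSymm)
    (h : Sweep c ρ L A A') : offSq A' ≤ sweepRate n ρ * offSq A := by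
  have hmn := hπ.le
  obtain ⟨hm, hc1, hcs⟩ := hπ
  obtain ⟨τ, E, hτ, hE, hL⟩ := hL
  obtain rfl : L = columnsList τ E 1 (m - 1) := hL
  have hc : ∀ i < m, c i ≤ n := fun i hi => hcs ▸ single_le_sum (fun _ _ => Nat.zero_le _)
    (mem_range.2 hi)
  have hμ0 : 0 < ρ * gammaMin n := mul_pos hρ0 (gammaMin_pos (by omega))
  have hμ1 : ρ * gammaMin n ≤ 1 :=
    mul_le_one₀ hρ1 (gammaMin_pos (by omega)).le (gammaMin_le_one (by omega))
  obtain ⟨B, rfl, rfl, hrun⟩ := h.exists_isRun fun p hp => by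
    have := lt_of_mem_columnsList hτ hE hp
    exact ⟨this.1.ne, mul_le_mul_of_nonneg_left (gammaMin_le_gammaUBC (hc _ (by omega))
      (hc _ this.2) (hc1 _ this.2)) hρ0.le⟩
  have hrec := offBlockSq_le_of_isRun_columnsList hτ hE hμ0 hμ1 hmn (offBlockSq c (B 0) (range m))
    (m - 1) 0 B (by omega) hrun hA le_rfl (by simp [offBlockSq])
  rw [zero_add] at hrec
  have hK := columnFactor_nonneg n hμ0.le
  have hrate := le_one_sub_div_mul (one_le_pow₀ (by linarith))
    (pow_le_pow_right₀ (by linarith) (by omega : m - 1 ≤ n)) (offBlockSq_nonneg _ _ _) hrec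
  have hA' := two_mul_offSq_eq_offBlockSq hcs (hrun.isSymm hA _ le_rfl) fun r hr =>
    hrun.blockDiag (exists_mem_columnsList hτ hm hr)
  have := mul_le_mul_of_nonneg_left (offBlockSq_le_two_mul_offSq hcs hA)
    (sweepRate_nonneg (n := n) (by omega) hρ0)
  unfold sweepRate at this ⊢
  linarith

end QuasiCyclicSweep

/-- Theorem 4.1: convergence bound for one sweep of the quasi-cyclic
block Jacobi method under any pivot sequence from `B̄_c^(m)`, with `UBC_π(ρ)`
transformations. -/
theorem statement8 :
    ∃ ηt : ℕ → ℝ → ℝ,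
      ∀ (n m : ℕ) (c : ℕ → ℕ) (ρ : ℝ),
        IsPartition n m c → 0 < ρ → ρ ≤ 1 →
        ∃ η : ℝ, 0 ≤ η ∧ η < ηt n ρ ∧ ηt n ρ < 1 ∧
          ∀ L : List (ℕ × ℕ), memBcQ m L →
            ∀ A A' : Matrix (Fin n) (Fin n) ℝ, A.IsSymm →
              Sweep c ρ L A A' → offSq A' ≤ η * offSq A := by
  refine ⟨fun n ρ => (1 + sweepRate n ρ) / 2, fun n m c ρ hπ hρ0 hρ1 => ?_⟩
  have hn : 1 ≤ n := by have := hπ.1; have := hπ.le; omega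
  have h0 := sweepRate_nonneg hn hρ0
  have h1 := sweepRate_lt_one hn hρ0
  exact ⟨sweepRate n ρ, h0, by linarith, by linarith, fun L hL A A' hA hs =>
    offSq_le_of_sweep hπ hρ0 hρ1 hL hA hs⟩

end

end BlockJacobi
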